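/- Assume u_a < 0 and u_b > 0. For every t > 0 and every x with x > max{d, b + √(2 u_b t)}, the approximate velocity u^ε(x,t) tends to 0 and the approximate potential density R^ε(x,t) tends to ρ_d as ε → 0⁺. -/

import Mathlib

open Real Filter Topology

/-- The unnormalized complementary error function `erfc z = ∫_z^∞ e^{-s²} ds`. -/
noncomputable def erfc (z : ℝ) : ℝ := ∫ s in Set.Ioi z, Real.exp (-s ^ 2)

/-- The denominator `D(x,t,ε)` appearing in the Hopf–Cole formulas. -/
noncomputable def D (a b u_a u_b x t ε : ℝ) : ℝ :=
  erfc ((x - a - u_a * t) / Real.sqrt (2 * t * ε))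
      * Real.exp (((x - a - u_a * t) ^ 2 - (x - a) ^ 2) / (2 * t * ε))
    + erfc ((x - b) / Real.sqrt (2 * t * ε))
    - erfc ((x - a) / Real.sqrt (2 * t * ε))
    + erfc (-(x - b) / Real.sqrt (2 * t * ε)) * Real.exp (-u_b / ε)

/-- The approximate velocity `u^ε(x,t)`. -/
noncomputable def uEps (a b u_a u_b x t ε : ℝ) : ℝ :=
  (u_a * erfc ((x - a - u_a * t) / Real.sqrt (2 * t * ε))
        * Real.exp (((x - a - u_a * t) ^ 2 - (x - a) ^ 2) / (2 * t * ε))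
      + ε / Real.sqrt (2 * t * ε) * Real.exp (-(x - b) ^ 2 / (2 * t * ε))
          * (1 - Real.exp (-u_b / ε)))
    / D a b u_a u_b x t ε

/-- The approximate potential density `R^ε(x,t)`. -/
noncomputable def REps (a b c d u_a u_b ρ_c ρ_d x t ε : ℝ) : ℝ :=
  (t * ε / Real.sqrt (2 * t * ε) * ρ_c * Real.exp (-(x - a) ^ 2 / (2 * t * ε))
      + ρ_c * (x - c - u_a * t)
          * Real.exp (((x - a - u_a * t) ^ 2 - (x - a) ^ 2) / (2 * t * ε))
          * erfc ((x - a - u_a * t) / Real.sqrt (2 * t * ε))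
      + t * ε / Real.sqrt (2 * t * ε) * ρ_c
          * (Real.exp (-(x - a) ^ 2 / (2 * t * ε)) - Real.exp (-(x - c) ^ 2 / (2 * t * ε)))
      + ρ_c * (x - c)
          * (erfc ((x - c) / Real.sqrt (2 * t * ε)) - erfc ((x - a) / Real.sqrt (2 * t * ε)))
      + ρ_d * Real.exp (-u_b / ε) * erfc (-(x - d) / Real.sqrt (2 * t * ε)))
    / D a b u_a u_b x t ε

open MeasureTheory Set

/-!
Multiply numerator and denominator of `u^ε` and `R^ε` by `e^{u_b/ε}`. In the denominator the
term `erfc (-(x - b)/√(2tε))` then tends to `√π`, and every other term is at most a power of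
`ε` times `e^{-K²/(2tε)} e^{u_b/ε}` with `K ≥ x - b`, by the Mills-ratio bound
`erfc z · e^{z²} ≤ 1/(2z)`. Far to the right `(x - b)² > 2 u_b t`, so all of these vanish,
and the same bookkeeping leaves only `ρ_d √π` in the numerator of `R^ε` and nothing in that
of `u^ε`.
-/

lemma integrable_exp_neg_sq : Integrable fun s : ℝ => exp (-s ^ 2) := by
  simpa using integrable_exp_neg_mul_sq one_pos

lemma integrable_mul_exp_neg_sq : Integrable fun s : ℝ => s * exp (-s ^ 2) := by
  simpa using integrable_mul_exp_neg_mul_sq one_pos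

lemma erfc_nonneg (z : ℝ) : 0 ≤ erfc z :=
  setIntegral_nonneg measurableSet_Ioi fun _ _ => (exp_pos _).le

lemma integral_Ioi_mul_exp_neg_sq (z : ℝ) :
    ∫ s in Ioi z, s * exp (-s ^ 2) = exp (-z ^ 2) / 2 := by
  have hderiv : ∀ s ∈ Ioi z,
      HasDerivAt (fun u : ℝ => -exp (-u ^ 2) / 2) (s * exp (-s ^ 2)) s := fun s _ => by
    refine ((hasDerivAt_pow 2 s).fun_neg.exp.fun_neg.div_const 2).congr_deriv ?_
    push_cast
    ring
  have hlim : Tendsto (fun u : ℝ => -exp (-u ^ 2) / 2) atTop (𝓝 0) := by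
    simpa using (tendsto_exp_atBot.comp
      (tendsto_neg_atTop_atBot.comp (tendsto_pow_atTop two_ne_zero))).neg.div_const 2
  rw [integral_Ioi_of_hasDerivAt_of_tendsto (by fun_prop : Continuous _).continuousWithinAt
    hderiv integrable_mul_exp_neg_sq.integrableOn hlim]
  ring

lemma erfc_mul_exp_sq_le {z : ℝ} (hz : 0 < z) : erfc z * exp (z ^ 2) ≤ 1 / (2 * z) := by
  have hle : erfc z ≤ ∫ s in Ioi z, z⁻¹ * (s * exp (-s ^ 2)) := by
    refine setIntegral_mono_on integrable_exp_neg_sq.integrableOn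
      (integrable_mul_exp_neg_sq.const_mul _).integrableOn measurableSet_Ioi fun s hs => ?_
    rw [← mul_assoc, ← div_eq_inv_mul]
    exact le_mul_of_one_le_left (exp_pos _).le ((one_le_div hz).2 (le_of_lt hs))
  rw [integral_const_mul, integral_Ioi_mul_exp_neg_sq] at hle
  calc erfc z * exp (z ^ 2) ≤ z⁻¹ * (exp (-z ^ 2) / 2) * exp (z ^ 2) := by gcongr
    _ = 1 / (2 * z) := by rw [exp_neg]; field_simp

lemma tendsto_erfc_atTop : Tendsto erfc atTop (𝓝 0) := by
  have hbound : Tendsto (fun z : ℝ => 1 / (2 * z)) atTop (𝓝 0) :=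
    tendsto_const_nhds.div_atTop (tendsto_id.const_mul_atTop two_pos)
  refine squeeze_zero' (Eventually.of_forall erfc_nonneg) ?_ hbound
  filter_upwards [eventually_gt_atTop 0] with z hz
  calc erfc z ≤ erfc z * exp (z ^ 2) :=
        le_mul_of_one_le_right (erfc_nonneg z) (one_le_exp (sq_nonneg z))
    _ ≤ 1 / (2 * z) := erfc_mul_exp_sq_le hz

lemma erfc_neg (z : ℝ) : erfc (-z) = √π - erfc z := by
  have hreflect : erfc (-z) = ∫ s in Iic z, exp (-s ^ 2) := by
    rw [erfc, ← neg_neg z, ← integral_comp_neg_Ioi]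
    simp
  have htotal : (∫ s in Iic z, exp (-s ^ 2)) + erfc z = √π := by
    rw [erfc, intervalIntegral.integral_Iic_add_Ioi integrable_exp_neg_sq.integrableOn
      integrable_exp_neg_sq.integrableOn]
    simpa using integral_gaussian 1
  linarith

lemma tendsto_erfc_atBot : Tendsto erfc atBot (𝓝 √π) := by
  have h := (tendsto_const_nhds (x := √π)).sub
    (tendsto_erfc_atTop.comp tendsto_neg_atBot_atTop)
  rw [sub_zero] at h
  exact h.congr fun z => by rw [Function.comp_apply, ← erfc_neg, neg_neg]

lemma exp_neg_div_mul_exp_div (c ε : ℝ) : exp (-c / ε) * exp (c / ε) = 1 := by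
  rw [← exp_add, neg_div, neg_add_cancel, exp_zero]

lemma tendsto_exp_div_nhdsGT_zero {c : ℝ} (hc : c < 0) :
    Tendsto (fun ε : ℝ => exp (c / ε)) (𝓝[>] 0) (𝓝 0) := by
  have h : Tendsto (fun ε : ℝ => c / ε) (𝓝[>] 0) atBot := by
    simpa only [div_eq_mul_inv] using
      (tendsto_const_mul_atBot_of_neg hc).2 tendsto_inv_nhdsGT_zero
  exact tendsto_exp_atBot.comp h

lemma tendsto_sqrt_mul_nhdsGT_zero {k : ℝ} (hk : 0 < k) :
    Tendsto (fun ε : ℝ => √(k * ε)) (𝓝[>] 0) (𝓝[>] 0) := by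
  refine tendsto_nhdsWithin_iff.2 ⟨?_, ?_⟩
  · have h : Tendsto (fun ε : ℝ => √(k * ε)) (𝓝 0) (𝓝 0) := by
      simpa using (continuous_const.mul continuous_id).sqrt.tendsto (0 : ℝ)
    exact h.mono_left nhdsWithin_le_nhds
  · filter_upwards [self_mem_nhdsWithin] with ε hε
    exact sqrt_pos.2 (mul_pos hk hε)

lemma tendsto_div_sqrt_mul_nhdsGT_zero {k : ℝ} (hk : 0 < k) :
    Tendsto (fun ε : ℝ => ε / √(k * ε)) (𝓝[>] 0) (𝓝 0) := by
  have h := ((tendsto_sqrt_mul_nhdsGT_zero hk).mono_right nhdsWithin_le_nhds).div_const k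
  rw [zero_div] at h
  refine h.congr' ?_
  filter_upwards [self_mem_nhdsWithin] with ε (hε : 0 < ε)
  have hkε : 0 < k * ε := mul_pos hk hε
  rw [div_eq_div_iff hk.ne' (sqrt_pos.2 hkε).ne', mul_self_sqrt hkε.le, mul_comm]

section Asymptotics

variable {t : ℝ}

lemma tendsto_exp_neg_sq_div_mul_exp_div {K c : ℝ} (ht : 0 < t) (h : c < K ^ 2 / (2 * t)) :
    Tendsto (fun ε : ℝ => exp (-K ^ 2 / (2 * t * ε)) * exp (c / ε)) (𝓝[>] 0) (𝓝 0) := by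
  refine (tendsto_exp_div_nhdsGT_zero (sub_neg.2 h)).congr fun ε => ?_
  rw [← exp_add]
  congr 1
  field_simp
  ring

lemma tendsto_erfc_mul_exp_sq_sub_sq_mul_exp_div {Z W c : ℝ} (ht : 0 < t) (hW : 0 < W)
    (hWZ : W ≤ Z) (h : c < W ^ 2 / (2 * t)) :
    Tendsto (fun ε : ℝ => erfc (Z / √(2 * t * ε)) * exp ((Z ^ 2 - W ^ 2) / (2 * t * ε))
      * exp (c / ε)) (𝓝[>] 0) (𝓝 0) := by
  have hZ : 0 < Z := hW.trans_le hWZ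
  have hσ := (tendsto_sqrt_mul_nhdsGT_zero (by positivity : 0 < 2 * t)).mono_right
    nhdsWithin_le_nhds
  have hbound := (hσ.div_const (2 * Z)).mul (tendsto_exp_div_nhdsGT_zero (sub_neg.2 h))
  rw [zero_div, zero_mul] at hbound
  refine squeeze_zero' (Eventually.of_forall fun ε => ?_) ?_ hbound
  · exact mul_nonneg (mul_nonneg (erfc_nonneg _) (exp_pos _).le) (exp_pos _).le
  filter_upwards [self_mem_nhdsWithin] with ε (hε : 0 < ε)
  set σ := √(2 * t * ε)
  have hσ0 : 0 < σ := sqrt_pos.2 (by positivity)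
  have hσsq : σ ^ 2 = 2 * t * ε := sq_sqrt (by positivity)
  have hsplit : exp ((Z ^ 2 - W ^ 2) / (2 * t * ε)) * exp (c / ε)
      = exp ((Z / σ) ^ 2) * exp ((c - W ^ 2 / (2 * t)) / ε) := by
    rw [← exp_add, ← exp_add, div_pow, hσsq]
    congr 1
    field_simp
    ring
  calc erfc (Z / σ) * exp ((Z ^ 2 - W ^ 2) / (2 * t * ε)) * exp (c / ε)
      = erfc (Z / σ) * exp ((Z / σ) ^ 2) * exp ((c - W ^ 2 / (2 * t)) / ε) := by
        rw [mul_assoc, hsplit, mul_assoc]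
    _ ≤ 1 / (2 * (Z / σ)) * exp ((c - W ^ 2 / (2 * t)) / ε) := by
        gcongr
        exact erfc_mul_exp_sq_le (by positivity)
    _ = σ / (2 * Z) * exp ((c - W ^ 2 / (2 * t)) / ε) := by
        field_simp

lemma tendsto_erfc_div_sqrt_mul_exp_div {K c : ℝ} (ht : 0 < t) (hK : 0 < K)
    (h : c < K ^ 2 / (2 * t)) :
    Tendsto (fun ε : ℝ => erfc (K / √(2 * t * ε)) * exp (c / ε)) (𝓝[>] 0) (𝓝 0) := by
  simpa using tendsto_erfc_mul_exp_sq_sub_sq_mul_exp_div ht hK le_rfl h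

lemma tendsto_erfc_neg_div_sqrt {K : ℝ} (ht : 0 < t) (hK : 0 < K) :
    Tendsto (fun ε : ℝ => erfc (-K / √(2 * t * ε))) (𝓝[>] 0) (𝓝 √π) := by
  have hinv := tendsto_inv_nhdsGT_zero.comp
    (tendsto_sqrt_mul_nhdsGT_zero (by positivity : 0 < 2 * t))
  have h := (tendsto_const_mul_atBot_of_neg (neg_lt_zero.2 hK)).2 hinv
  exact tendsto_erfc_atBot.comp (by simpa only [div_eq_mul_inv, Function.comp_def] using h)

end Asymptotics

lemma tendsto_div_of_tendsto_mul {α 𝕜 : Type*} [NormedField 𝕜] {l : Filter α}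
    {f g h : α → 𝕜} {q r : 𝕜} (hg : Tendsto (fun y => g y * h y) l (𝓝 q)) (hq : q ≠ 0)
    (hh : ∀ y, h y ≠ 0)
    (hf : Tendsto (fun y => f y * h y) l (𝓝 (r * q))) :
    Tendsto (fun y => f y / g y) l (𝓝 r) := by
  have h := hf.div hg hq
  rw [mul_div_cancel_right₀ r hq] at h
  exact h.congr fun y => mul_div_mul_right _ _ (hh y)

section FarRight

variable {a b c d u_a u_b ρ_c ρ_d x t : ℝ}

lemma lt_sq_div_of_sub_le (ht : 0 < t) (hbx : b < x) (hfar : u_b < (x - b) ^ 2 / (2 * t))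
    {K : ℝ} (hK : x - b ≤ K) : u_b < K ^ 2 / (2 * t) :=
  hfar.trans_le (by gcongr)

lemma tendsto_erfc_shift_mul_exp (ht : 0 < t) (hab : a < b) (hua : u_a ≤ 0) (hbx : b < x)
    (hfar : u_b < (x - b) ^ 2 / (2 * t)) :
    Tendsto (fun ε : ℝ => erfc ((x - a - u_a * t) / √(2 * t * ε))
      * exp (((x - a - u_a * t) ^ 2 - (x - a) ^ 2) / (2 * t * ε)) * exp (u_b / ε))
      (𝓝[>] 0) (𝓝 0) :=
  tendsto_erfc_mul_exp_sq_sub_sq_mul_exp_div ht (sub_pos.2 (hab.trans hbx))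
    (by nlinarith) (lt_sq_div_of_sub_le ht hbx hfar (by linarith))

lemma tendsto_D_mul_exp (ht : 0 < t) (hab : a < b) (hua : u_a ≤ 0) (hbx : b < x)
    (hfar : u_b < (x - b) ^ 2 / (2 * t)) :
    Tendsto (fun ε => D a b u_a u_b x t ε * exp (u_b / ε)) (𝓝[>] 0) (𝓝 √π) := by
  have hb := tendsto_erfc_div_sqrt_mul_exp_div ht (sub_pos.2 hbx) hfar
  have ha := tendsto_erfc_div_sqrt_mul_exp_div ht (sub_pos.2 (hab.trans hbx))
    (lt_sq_div_of_sub_le ht hbx hfar (by linarith))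
  have hlim := (((tendsto_erfc_shift_mul_exp ht hab hua hbx hfar).add hb).sub ha).add
    (tendsto_erfc_neg_div_sqrt ht (sub_pos.2 hbx))
  rw [add_zero, sub_zero, zero_add] at hlim
  refine hlim.congr fun ε => ?_
  rw [D]
  linear_combination -erfc (-(x - b) / √(2 * t * ε)) * exp_neg_div_mul_exp_div u_b ε

theorem tendsto_uEps_of_far_right (ht : 0 < t) (hab : a < b) (hua : u_a ≤ 0) (hbx : b < x)
    (hfar : u_b < (x - b) ^ 2 / (2 * t)) :
    Tendsto (fun ε => uEps a b u_a u_b x t ε) (𝓝[>] 0) (𝓝 0) := by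
  simp only [uEps]
  refine tendsto_div_of_tendsto_mul (tendsto_D_mul_exp ht hab hua hbx hfar)
    (sqrt_ne_zero'.2 pi_pos) (fun ε => (exp_pos _).ne') ?_
  have hgauss := tendsto_exp_neg_sq_div_mul_exp_div ht hfar
  have hgauss₀ := tendsto_exp_neg_sq_div_mul_exp_div (K := x - b) (c := 0) ht (by positivity)
  have hlim := ((tendsto_erfc_shift_mul_exp ht hab hua hbx hfar).const_mul u_a).add
    ((tendsto_div_sqrt_mul_nhdsGT_zero (by positivity : 0 < 2 * t)).mul (hgauss.sub hgauss₀))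
  simp only [mul_zero, sub_self, add_zero, zero_mul] at hlim ⊢
  refine hlim.congr fun ε => ?_
  rw [zero_div, exp_zero]
  linear_combination (ε / √(2 * t * ε) * exp (-(x - b) ^ 2 / (2 * t * ε)))
    * exp_neg_div_mul_exp_div u_b ε

theorem tendsto_REps_of_far_right (ht : 0 < t) (hac : a < c) (hcb : c < b) (hua : u_a ≤ 0)
    (hbx : b < x) (hdx : d < x) (hfar : u_b < (x - b) ^ 2 / (2 * t)) :
    Tendsto (fun ε => REps a b c d u_a u_b ρ_c ρ_d x t ε) (𝓝[>] 0) (𝓝 ρ_d) := by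
  simp only [REps]
  have hab := hac.trans hcb
  refine tendsto_div_of_tendsto_mul (tendsto_D_mul_exp ht hab hua hbx hfar)
    (sqrt_ne_zero'.2 pi_pos) (fun ε => (exp_pos _).ne') ?_
  have hxa : x - b ≤ x - a := by linarith
  have hxc : x - b ≤ x - c := by linarith
  have hσ := tendsto_div_sqrt_mul_nhdsGT_zero (by positivity : 0 < 2 * t)
  have hgauss_a := tendsto_exp_neg_sq_div_mul_exp_div ht (lt_sq_div_of_sub_le ht hbx hfar hxa)
  have hgauss_c := tendsto_exp_neg_sq_div_mul_exp_div ht (lt_sq_div_of_sub_le ht hbx hfar hxc)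
  have herfc_a := tendsto_erfc_div_sqrt_mul_exp_div ht (sub_pos.2 (hab.trans hbx))
    (lt_sq_div_of_sub_le ht hbx hfar hxa)
  have herfc_c := tendsto_erfc_div_sqrt_mul_exp_div ht (sub_pos.2 (hcb.trans hbx))
    (lt_sq_div_of_sub_le ht hbx hfar hxc)
  have hlim := (((((hσ.mul hgauss_a).const_mul (ρ_c * t)).add
    ((tendsto_erfc_shift_mul_exp ht hab hua hbx hfar).const_mul (ρ_c * (x - c - u_a * t)))).add
    ((hσ.mul (hgauss_a.sub hgauss_c)).const_mul (ρ_c * t))).add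
    ((herfc_c.sub herfc_a).const_mul (ρ_c * (x - c)))).add
    ((tendsto_erfc_neg_div_sqrt ht (sub_pos.2 hdx)).const_mul ρ_d)
  simp only [mul_zero, sub_zero, add_zero, zero_add] at hlim
  refine hlim.congr fun ε => ?_
  linear_combination -ρ_d * erfc (-(x - d) / √(2 * t * ε)) * exp_neg_div_mul_exp_div u_b ε

end FarRight

theorem vanishing_viscosity_limit_far_right_general
    (a b c d u_a u_b ρ_c ρ_d : ℝ) (hac : a < c) (hcb : c < b)
    (hua : u_a < 0) (t x : ℝ) (ht : 0 < t)
    (hx : max d (b + Real.sqrt (2 * u_b * t)) < x) :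
    Tendsto (fun ε : ℝ => uEps a b u_a u_b x t ε) (𝓝[>] 0) (𝓝 0)
    ∧ Tendsto (fun ε : ℝ => REps a b c d u_a u_b ρ_c ρ_d x t ε) (𝓝[>] 0) (𝓝 ρ_d) := by
  have hdx : d < x := (le_max_left _ _).trans_lt hx
  have hsqrt : √(2 * u_b * t) < x - b := by linarith [le_max_right d (b + √(2 * u_b * t))]
  have hbx : b < x := by linarith [sqrt_nonneg (2 * u_b * t)]
  have hfar : u_b < (x - b) ^ 2 / (2 * t) := by
    rw [lt_div_iff₀ (by positivity)]
    linarith [lt_sq_of_sqrt_lt hsqrt]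
  exact ⟨tendsto_uEps_of_far_right ht (hac.trans hcb) hua.le hbx hfar,
    tendsto_REps_of_far_right ht hac hcb hua.le hbx hdx hfar⟩

/-- Case `u_a < 0`, `u_b > 0`, region `x > max {d, b + √(2·u_b·t)}`: as `ε → 0⁺`, the
approximate velocity tends to `0` and the approximate potential density tends to `ρ_d`. -/
theorem vanishing_viscosity_limit_far_right
    (a b c d u_a u_b ρ_c ρ_d : ℝ) (hac : a < c) (hcb : c < b) (hbd : b < d)
    (hua : u_a < 0) (hub : 0 < u_b) (t x : ℝ) (ht : 0 < t)
    (hx : max d (b + Real.sqrt (2 * u_b * t)) < x) :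
    Tendsto (fun ε : ℝ => uEps a b u_a u_b x t ε) (𝓝[>] 0) (𝓝 0)
    ∧ Tendsto (fun ε : ℝ => REps a b c d u_a u_b ρ_c ρ_d x t ε) (𝓝[>] 0) (𝓝 ρ_d) :=
  vanishing_viscosity_limit_far_right_general a b c d u_a u_b ρ_c ρ_d hac hcb hua t x ht hx
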